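/- Let H be a Hopf algebra, A a braided Hopf algebra in Yetter–Drinfeld modules over H, K a left coideal subalgebra of A in left H-comodules, and Ā = A/K⁺A. Then the canonical map can : A ⊗_K A → A ⊗ Ā, x ⊗ y ↦ x y⁽¹⁾ ⊗ (class of y⁽²⁾), is a bijective map that is right Ā-colinear and left H-colinear. -/

import Mathlib

open TensorProduct LinearMap

universe u
set_option maxHeartbeats 1000000

section Prelude

variable (k : Type u) [Field k]

/-- A left comodule structure map over a coalgebra-like datum `(Δ, ε)` on `C`. -/
structure IsComod {C V : Type u} [AddCommGroup C] [Module k C]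
    [AddCommGroup V] [Module k V]
    (ρ : V →ₗ[k] C ⊗[k] V) (Δ : C →ₗ[k] C ⊗[k] C) (ε : C →ₗ[k] k) : Prop where
  counit : (TensorProduct.lid k V).toLinearMap ∘ₗ ε.rTensor V ∘ₗ ρ = LinearMap.id
  coassoc : Δ.rTensor V ∘ₗ ρ
      = (TensorProduct.assoc k C C V).symm.toLinearMap ∘ₗ ρ.lTensor C ∘ₗ ρ

/-- A right comodule structure map. -/
structure IsRightComod {C V : Type u} [AddCommGroup C] [Module k C]
    [AddCommGroup V] [Module k V]
    (ρ : V →ₗ[k] V ⊗[k] C) (Δ : C →ₗ[k] C ⊗[k] C) (ε : C →ₗ[k] k) : Prop where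
  counit : (TensorProduct.rid k V).toLinearMap ∘ₗ ε.lTensor V ∘ₗ ρ = LinearMap.id
  coassoc : Δ.lTensor V ∘ₗ ρ
      = (TensorProduct.assoc k V C C).toLinearMap ∘ₗ ρ.rTensor C ∘ₗ ρ

/-- A right module structure map over an algebra-like datum `(μ, 1)` on `B`. -/
structure IsRightMod {B V : Type u} [AddCommGroup B] [Module k B]
    [AddCommGroup V] [Module k V]
    (σ : V ⊗[k] B →ₗ[k] V) (μ : B ⊗[k] B →ₗ[k] B) (oneB : B) : Prop where
  act_one : ∀ v : V, σ (v ⊗ₜ oneB) = v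
  act_assoc : σ ∘ₗ σ.rTensor B
      = σ ∘ₗ μ.lTensor V ∘ₗ (TensorProduct.assoc k V B B).toLinearMap

/-- Diagonal left `H`-coaction on a tensor product of two `H`-comodules. -/
noncomputable def diagCoact {H V W : Type u} [Ring H] [Algebra k H]
    [AddCommGroup V] [Module k V] [AddCommGroup W] [Module k W]
    (ρV : V →ₗ[k] H ⊗[k] V) (ρW : W →ₗ[k] H ⊗[k] W) :
    V ⊗[k] W →ₗ[k] H ⊗[k] (V ⊗[k] W) :=
  (LinearMap.mul' k H).rTensor (V ⊗[k] W)
    ∘ₗ (tensorTensorTensorComm k H V H W).toLinearMap ∘ₗ map ρV ρW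

/-- A braided Hopf algebra `A` in the Yetter–Drinfeld category over the Hopf algebra `H`,
with all structure maps given explicitly as linear maps. -/
structure BHA (H : Type u) [Ring H] [HopfAlgebra k H]
    (A : Type u) [AddCommGroup A] [Module k A] where
  mul : A ⊗[k] A →ₗ[k] A
  one : A
  comul : A →ₗ[k] A ⊗[k] A
  counit : A →ₗ[k] k
  antipode : A →ₗ[k] A
  coact : A →ₗ[k] H ⊗[k] A
  act : H ⊗[k] A →ₗ[k] A
  -- algebra axioms
  mul_assoc' : mul ∘ₗ mul.rTensor A
      = mul ∘ₗ mul.lTensor A ∘ₗ (TensorProduct.assoc k A A A).toLinearMap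
  one_mul' : ∀ a : A, mul (one ⊗ₜ a) = a
  mul_one' : ∀ a : A, mul (a ⊗ₜ one) = a
  -- coalgebra axioms
  isCoalg : IsComod k comul comul counit  -- encodes coassociativity and left counit axiom
  comul_counit : (TensorProduct.rid k A).toLinearMap ∘ₗ counit.lTensor A ∘ₗ comul
      = LinearMap.id
  -- `H`-comodule axioms
  isComodH : IsComod k coact (Coalgebra.comul (R := k) (A := H)) (Coalgebra.counit (R := k) (A := H))
  -- `H`-module axioms
  act_one' : ∀ a : A, act ((1 : H) ⊗ₜ a) = a
  act_mul' : ∀ (g h : H) (a : A), act ((g * h) ⊗ₜ a) = act (g ⊗ₜ act (h ⊗ₜ a))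
  -- `A` is an `H`-module algebra
  act_alg : act ∘ₗ mul.lTensor H
      = mul ∘ₗ map act act ∘ₗ (tensorTensorTensorComm k H H A A).toLinearMap
          ∘ₗ (Coalgebra.comul (R := k) (A := H)).rTensor (A ⊗[k] A)
  act_unit : ∀ h : H, act (h ⊗ₜ one) = Coalgebra.counit (R := k) h • one
  -- `A` is an `H`-comodule algebra
  coact_mul : coact ∘ₗ mul = mul.lTensor H ∘ₗ diagCoact k coact coact
  coact_one : coact one = 1 ⊗ₜ one
  -- Yetter–Drinfeld compatibility: h⁽¹⁾a₍₋₁₎ ⊗ h⁽²⁾·a₍₀₎ = (h⁽¹⁾·a)₍₋₁₎h⁽²⁾ ⊗ (h⁽¹⁾·a)₍₀₎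
  yd : map (LinearMap.mul' k H) act
        ∘ₗ (tensorTensorTensorComm k H H H A).toLinearMap
        ∘ₗ coact.lTensor (H ⊗[k] H)
        ∘ₗ (Coalgebra.comul (R := k) (A := H)).rTensor A
      = (LinearMap.mul' k H).rTensor A
        ∘ₗ (TensorProduct.assoc k H H A).symm.toLinearMap
        ∘ₗ (TensorProduct.comm k A H).toLinearMap.lTensor H
        ∘ₗ (TensorProduct.assoc k H A H).toLinearMap
        ∘ₗ (coact ∘ₗ act).rTensor H
        ∘ₗ (TensorProduct.assoc k H A H).symm.toLinearMap
        ∘ₗ (TensorProduct.comm k H A).toLinearMap.lTensor H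
        ∘ₗ (TensorProduct.assoc k H H A).toLinearMap
        ∘ₗ (Coalgebra.comul (R := k) (A := H)).rTensor A
  -- the braiding of the Yetter–Drinfeld category on `A ⊗ A`
  braid : A ⊗[k] A →ₗ[k] A ⊗[k] A
  braid_def : braid = act.rTensor A
      ∘ₗ (TensorProduct.assoc k H A A).symm.toLinearMap
      ∘ₗ (TensorProduct.comm k A A).toLinearMap.lTensor H
      ∘ₗ (TensorProduct.assoc k H A A).toLinearMap
      ∘ₗ coact.rTensor A
  -- the braided algebra structure on `A ⊗ A`
  mulAA : (A ⊗[k] A) ⊗[k] (A ⊗[k] A) →ₗ[k] A ⊗[k] A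
  mulAA_def : mulAA = map mul mul
      ∘ₗ (TensorProduct.assoc k A A (A ⊗[k] A)).symm.toLinearMap
      ∘ₗ ((TensorProduct.assoc k A A A).toLinearMap
            ∘ₗ braid.rTensor A
            ∘ₗ (TensorProduct.assoc k A A A).symm.toLinearMap).lTensor A
      ∘ₗ (TensorProduct.assoc k A A (A ⊗[k] A)).toLinearMap
  -- braided bialgebra axioms
  comul_mul : comul ∘ₗ mul = mulAA ∘ₗ map comul comul
  counit_mul : ∀ x y : A, counit (mul (x ⊗ₜ y)) = counit x * counit y
  comul_one : comul one = one ⊗ₜ one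
  counit_one : counit one = 1
  -- antipode axioms
  antipode_left : ∀ a : A, mul (antipode.rTensor A (comul a)) = counit a • one
  antipode_right : ∀ a : A, mul (antipode.lTensor A (comul a)) = counit a • one
  -- the comultiplication and counit of `A` are `H`-colinear
  comul_colinear : diagCoact k coact coact ∘ₗ comul = comul.lTensor H ∘ₗ coact
  counit_colinear : ∀ a : A, counit.lTensor H (coact a) = counit a • ((1 : H) ⊗ₜ (1 : k))

namespace BHA

variable {k} {H A : Type u} [Ring H] [HopfAlgebra k H]
  [AddCommGroup A] [Module k A]

/-- Group-like elements of `A`. -/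
def IsGroupLike (S : BHA k H A) (g : A) : Prop :=
  S.comul g = g ⊗ₜ g ∧ S.counit g = 1

/-- `C` is a subcoalgebra of `A`. -/
def IsSubcoalgebra (S : BHA k H A) (C : Submodule k A) : Prop :=
  ∀ c ∈ C, S.comul c ∈ LinearMap.range (map C.subtype C.subtype)

/-- `C` is a simple subcoalgebra of `A`. -/
def IsSimpleSubcoalgebra (S : BHA k H A) (C : Submodule k A) : Prop :=
  S.IsSubcoalgebra C ∧ C ≠ ⊥ ∧
    ∀ D : Submodule k A, S.IsSubcoalgebra D → D ≤ C → D ≠ ⊥ → D = C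

/-- `A` is pointed: all its simple subcoalgebras are one-dimensional. -/
def IsPointed (S : BHA k H A) : Prop :=
  ∀ C : Submodule k A, S.IsSimpleSubcoalgebra C → Module.finrank k C = 1

/-- `K` is a left coideal subalgebra of `A` in the category of left `H`-comodules. -/
def IsLeftCoidealSubalgebra (S : BHA k H A) (K : Submodule k A) : Prop :=
  S.one ∈ K ∧ (∀ x ∈ K, ∀ y ∈ K, S.mul (x ⊗ₜ y) ∈ K) ∧
    (∀ x ∈ K, S.comul x ∈ LinearMap.range (K.subtype.lTensor A)) ∧
    (∀ x ∈ K, S.coact x ∈ LinearMap.range (K.subtype.lTensor H))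

end BHA

end Prelude

section Prelude2

variable (k : Type u) [Field k]

/-- `W` is a subcomodule for the coaction `ρ`. -/
def IsSubcomod {C V : Type u} [AddCommGroup C] [Module k C] [AddCommGroup V] [Module k V]
    (ρ : V →ₗ[k] C ⊗[k] V) (W : Submodule k V) : Prop :=
  ∀ w ∈ W, ρ w ∈ LinearMap.range (W.subtype.lTensor C)

/-- A coalgebra-datum `(Δ, ε)` is cosemisimple if every subcomodule of every comodule
admits a complementary subcomodule. -/
def CosemisimpleCoalg {C : Type u} [AddCommGroup C] [Module k C]
    (Δ : C →ₗ[k] C ⊗[k] C) (ε : C →ₗ[k] k) : Prop :=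
  ∀ (V : Type u) [AddCommGroup V] [Module k V] (ρ : V →ₗ[k] C ⊗[k] V),
    IsComod k ρ Δ ε → ∀ W : Submodule k V, IsSubcomod k ρ W →
      ∃ W' : Submodule k V, IsCompl W W' ∧ IsSubcomod k ρ W'

/-- The half-braided diagonal right action of `K'` on `A ⊗ X`:
`(a ⊗ x) · c = a (x₍₋₁₎ · c⁽¹⁾) ⊗ x₍₀₎ · c⁽²⁾`. -/
noncomputable def halfBraidedAction {H A X K' : Type u} [Ring H] [Algebra k H]
    [AddCommGroup A] [Module k A] [AddCommGroup X] [Module k X]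
    [AddCommGroup K'] [Module k K']
    (mulA : A ⊗[k] A →ₗ[k] A) (act : H ⊗[k] A →ₗ[k] A)
    (ρX : X →ₗ[k] H ⊗[k] X) (σX : X ⊗[k] K' →ₗ[k] X)
    (comulK : K' →ₗ[k] A ⊗[k] K') :
    (A ⊗[k] X) ⊗[k] K' →ₗ[k] A ⊗[k] X :=
  map (mulA ∘ₗ act.lTensor A ∘ₗ (TensorProduct.assoc k A H A).toLinearMap) σX
    ∘ₗ (tensorTensorTensorComm k (A ⊗[k] H) X A K').toLinearMap
    ∘ₗ ((TensorProduct.assoc k A H X).symm.toLinearMap ∘ₗ ρX.lTensor A).rTensor (A ⊗[k] K')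
    ∘ₗ comulK.lTensor (A ⊗[k] X)

/-- The half-braided diagonal left `A`-coaction on `U ⊗ K'`:
`u ⊗ c ↦ u⁽⁻¹⁾ (u⁽⁰⁾₍₋₁₎ · c⁽¹⁾) ⊗ u⁽⁰⁾₍₀₎ ⊗ c⁽²⁾`. -/
noncomputable def halfBraidedCoact {H A U K' : Type u} [Ring H] [Algebra k H]
    [AddCommGroup A] [Module k A] [AddCommGroup U] [Module k U]
    [AddCommGroup K'] [Module k K']
    (mulA : A ⊗[k] A →ₗ[k] A) (act : H ⊗[k] A →ₗ[k] A)
    (ρAU : U →ₗ[k] A ⊗[k] U) (ρHU : U →ₗ[k] H ⊗[k] U)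
    (comulK : K' →ₗ[k] A ⊗[k] K') :
    U ⊗[k] K' →ₗ[k] A ⊗[k] (U ⊗[k] K') :=
  map (mulA ∘ₗ act.lTensor A ∘ₗ (TensorProduct.assoc k A H A).toLinearMap) LinearMap.id
    ∘ₗ (tensorTensorTensorComm k (A ⊗[k] H) U A K').toLinearMap
    ∘ₗ ((TensorProduct.assoc k A H U).symm.toLinearMap ∘ₗ ρHU.lTensor A).rTensor (A ⊗[k] K')
    ∘ₗ map ρAU comulK

namespace BHA

variable {k} {H A : Type u} [Ring H] [HopfAlgebra k H] [AddCommGroup A] [Module k A]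

/-- `comulK` is the restriction of the comultiplication of `A` to the left coideal `K`. -/
def RestrictsComul (S : BHA k H A) (K : Submodule k A)
    (comulK : ↥K →ₗ[k] A ⊗[k] ↥K) : Prop :=
  K.subtype.lTensor A ∘ₗ comulK = S.comul ∘ₗ K.subtype

/-- `coactK` is the restriction of the `H`-coaction of `A` to `K`. -/
def RestrictsCoact (S : BHA k H A) (K : Submodule k A)
    (coactK : ↥K →ₗ[k] H ⊗[k] ↥K) : Prop :=
  K.subtype.lTensor H ∘ₗ coactK = S.coact ∘ₗ K.subtype

/-- `mulK` is the restriction of the multiplication of `A` to the subalgebra `K`. -/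
def RestrictsMul (S : BHA k H A) (K : Submodule k A)
    (mulK : ↥K ⊗[k] ↥K →ₗ[k] ↥K) : Prop :=
  K.subtype ∘ₗ mulK = S.mul ∘ₗ map K.subtype K.subtype

variable (S : BHA k H A) (K : Submodule k A)

/-- A (left-right) Hopf module in `^A(^H 𝓜)_K`: a left `H`-comodule `V` with a
left `A`-coaction and a right `K`-action, all `H`-colinear, such that the `A`-coaction
is right `K`-linear for the half-braided diagonal `K`-action on `A ⊗ V`. -/
structure IsHopfModule (mulK : ↥K ⊗[k] ↥K →ₗ[k] ↥K) (oneK : ↥K)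
    (comulK : ↥K →ₗ[k] A ⊗[k] ↥K) (coactK : ↥K →ₗ[k] H ⊗[k] ↥K)
    {V : Type u} [AddCommGroup V] [Module k V]
    (ρH : V →ₗ[k] H ⊗[k] V) (ρA : V →ₗ[k] A ⊗[k] V)
    (σ : V ⊗[k] ↥K →ₗ[k] V) : Prop where
  comodH : IsComod k ρH (Coalgebra.comul (R := k) (A := H)) (Coalgebra.counit (R := k) (A := H))
  comodA : IsComod k ρA S.comul S.counit
  modK : IsRightMod k σ mulK oneK
  colinearA : diagCoact k S.coact ρH ∘ₗ ρA = ρA.lTensor H ∘ₗ ρH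
  colinearK : ρH ∘ₗ σ = σ.lTensor H ∘ₗ diagCoact k ρH coactK
  Klinear : ρA ∘ₗ σ = halfBraidedAction k S.mul S.act ρH σ comulK ∘ₗ ρA.rTensor ↥K

/-- `V` (with right `K`-action `σ` and `H`-coaction `ρH`) is `K`-free in the category of
left `H`-comodules: it is freely generated as a `K`-module by an `H`-subcomodule. -/
def IsKFree {V : Type u} [AddCommGroup V] [Module k V]
    (ρH : V →ₗ[k] H ⊗[k] V) (σ : V ⊗[k] ↥K →ₗ[k] V) : Prop :=
  ∃ X : Submodule k V, IsSubcomod k ρH X ∧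
    Function.Bijective (σ ∘ₗ X.subtype.rTensor ↥K)

end BHA

end Prelude2

section Quot

variable {k H A : Type u} [Field k] [Ring H] [HopfAlgebra k H]
  [AddCommGroup A] [Module k A]

/-- The subspace `K⁺A ⊆ A`, where `K⁺ = K ∩ ker ε`. -/
noncomputable def BHA.KplusA (S : BHA k H A) (K : Submodule k A) : Submodule k A :=
  LinearMap.range (S.mul ∘ₗ (K ⊓ LinearMap.ker S.counit).subtype.rTensor A)

/-- The right `Ā`-comodule structure map `A → A ⊗ Ā`, `a ↦ a⁽¹⁾ ⊗ (class of a⁽²⁾)`,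
where `Ā = A/K⁺A`. -/
noncomputable def BHA.deltaBar (S : BHA k H A) (K : Submodule k A) :
    A →ₗ[k] A ⊗[k] (A ⧸ S.KplusA K) :=
  (S.KplusA K).mkQ.lTensor A ∘ₗ S.comul

end Quot

/-- The subspace of `A ⊗ A` whose quotient is `A ⊗_K A`. -/
noncomputable def BHA.relK {k H A : Type u} [Field k] [Ring H] [HopfAlgebra k H]
    [AddCommGroup A] [Module k A] (S : BHA k H A) (K : Submodule k A) :
    Submodule k (A ⊗[k] A) :=
  Submodule.span k {z | ∃ x y c : A, c ∈ K ∧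
    z = S.mul (x ⊗ₜ c) ⊗ₜ y - x ⊗ₜ S.mul (c ⊗ₜ y)}

/-! The Galois map `β : x ⊗ y ↦ x y⁽¹⁾ ⊗ y⁽²⁾` of `A` is invertible with inverse
`γ : x ⊗ y ↦ x S(y⁽¹⁾) ⊗ y⁽²⁾`, because the maps `x ⊗ y ↦ x f(y⁽¹⁾) ⊗ y⁽²⁾` compose by
convolution of the `f`'s. Write `π : A → Ā`. For `c ∈ K` the second legs of `Δ(c)` and of their
`H`-coactions lie in `K`, and `π(κ v) = ε(κ) π(v)` for `κ ∈ K`; hence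
`(id ⊗ π)(Δ(c)(u ⊗ v)) = cu ⊗ π(v)`, so `can = (id ⊗ π) ∘ β` factors through `A ⊗_K A`, and
`Δ`, the `H`-coaction and the right `Ā`-coaction descend as well. Convolving
`u ↦ S(c⁽¹⁾ (c⁽²⁾₍₋₁₎ · u)) c⁽²⁾₍₀₎` with the identity gives `ε(c) ε`, so this map is `ε(c) S`;
moving `c⁽²⁾₍₀₎ ∈ K` across `⊗_K` then shows `γ(x ⊗ cy) = ε(c) γ(x ⊗ y)` in `A ⊗_K A`, so `γ`
kills `A ⊗ K⁺A = ker (id ⊗ π)` and `can` is bijective. Right `Ā`-colinearity is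
coassociativity; left `H`-colinearity holds because `β` is a composite of `H`-colinear maps. -/

theorem eq_of_mem_range_lTensor_subtype {R M V N : Type*} [CommSemiring R] [AddCommMonoid M]
    [Module R M] [AddCommMonoid V] [Module R V] [AddCommMonoid N] [Module R N]
    (p : Submodule R V) {f g : M ⊗[R] V →ₗ[R] N}
    (h : ∀ m, ∀ v ∈ p, f (m ⊗ₜ v) = g (m ⊗ₜ v)) {t : M ⊗[R] V}
    (ht : t ∈ range (p.subtype.lTensor M)) : f t = g t := by
  obtain ⟨s, rfl⟩ := ht
  exact LinearMap.congr_fun (TensorProduct.ext' fun m v => h m v v.2 :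
    f ∘ₗ p.subtype.lTensor M = g ∘ₗ p.subtype.lTensor M) s

theorem exists_lTensor_subtype_comp_eq {k M V W : Type*} [Field k] [AddCommGroup M] [Module k M]
    [AddCommGroup V] [Module k V] [AddCommGroup W] [Module k W] (p : Submodule k V)
    (f : W →ₗ[k] M ⊗[k] V) (hf : ∀ w, f w ∈ range (p.subtype.lTensor M)) :
    ∃ g : W →ₗ[k] M ⊗[k] p, p.subtype.lTensor M ∘ₗ g = f := by
  obtain ⟨ℓ, hℓ⟩ := (p.subtype.lTensor M).exists_leftInverse_of_injective
    (ker_eq_bot.mpr (Module.Flat.lTensor_preserves_injective_linearMap _ p.injective_subtype))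
  refine ⟨ℓ ∘ₗ f, LinearMap.ext fun w => ?_⟩
  obtain ⟨t, ht⟩ := hf w
  rw [LinearMap.comp_apply, LinearMap.comp_apply, ← ht, ← LinearMap.comp_apply ℓ, hℓ,
    LinearMap.id_apply]

section Colinear

variable {k H U V W : Type*} [CommSemiring k] [AddCommMonoid H] [Module k H]
  [AddCommMonoid U] [Module k U] [AddCommMonoid V] [Module k V] [AddCommMonoid W] [Module k W]

def IsColinear (ρ : V →ₗ[k] H ⊗[k] V) (ρ' : W →ₗ[k] H ⊗[k] W) (f : V →ₗ[k] W) : Prop :=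
  ρ' ∘ₗ f = f.lTensor H ∘ₗ ρ

theorem isColinear_id (ρ : V →ₗ[k] H ⊗[k] V) : IsColinear ρ ρ LinearMap.id := by
  simp [IsColinear]

theorem IsColinear.comp {ρU : U →ₗ[k] H ⊗[k] U} {ρV : V →ₗ[k] H ⊗[k] V}
    {ρW : W →ₗ[k] H ⊗[k] W} {g : V →ₗ[k] W} {f : U →ₗ[k] V}
    (hg : IsColinear ρV ρW g) (hf : IsColinear ρU ρV f) : IsColinear ρU ρW (g ∘ₗ f) := by
  unfold IsColinear at *
  rw [← LinearMap.comp_assoc, hg, LinearMap.comp_assoc, hf, ← LinearMap.comp_assoc,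
    ← lTensor_comp]

theorem IsColinear.of_comp_surjective {ρU : U →ₗ[k] H ⊗[k] U} {ρV : V →ₗ[k] H ⊗[k] V}
    {ρW : W →ₗ[k] H ⊗[k] W} {g : V →ₗ[k] W} {q : U →ₗ[k] V}
    (hq : IsColinear ρU ρV q) (hsurj : Function.Surjective q)
    (h : IsColinear ρU ρW (g ∘ₗ q)) : IsColinear ρV ρW g := by
  unfold IsColinear at *
  rw [← LinearMap.cancel_right hsurj, LinearMap.comp_assoc, h, lTensor_comp, LinearMap.comp_assoc,
    LinearMap.comp_assoc, hq]

end Colinear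

section DiagCoact

variable {k H : Type u} [Field k] [Ring H] [Algebra k H]
  {U V W V' W' : Type u} [AddCommGroup U] [Module k U] [AddCommGroup V] [Module k V]
  [AddCommGroup W] [Module k W] [AddCommGroup V'] [Module k V'] [AddCommGroup W'] [Module k W']

theorem IsColinear.map {ρV : V →ₗ[k] H ⊗[k] V} {ρW : W →ₗ[k] H ⊗[k] W}
    {ρV' : V' →ₗ[k] H ⊗[k] V'} {ρW' : W' →ₗ[k] H ⊗[k] W'} {f : V →ₗ[k] V'} {g : W →ₗ[k] W'}
    (hf : IsColinear ρV ρV' f) (hg : IsColinear ρW ρW' g) :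
    IsColinear (diagCoact k ρV ρW) (diagCoact k ρV' ρW') (TensorProduct.map f g) := by
  unfold IsColinear diagCoact at *
  rw [LinearMap.comp_assoc, LinearMap.comp_assoc, ← TensorProduct.map_comp, hf, hg,
    TensorProduct.map_comp]
  simp only [← LinearMap.comp_assoc]
  congr 1
  ext; simp

theorem isColinear_assoc_symm (ρU : U →ₗ[k] H ⊗[k] U) (ρV : V →ₗ[k] H ⊗[k] V)
    (ρW : W →ₗ[k] H ⊗[k] W) :
    IsColinear (diagCoact k ρU (diagCoact k ρV ρW)) (diagCoact k (diagCoact k ρU ρV) ρW)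
      (TensorProduct.assoc k U V W).symm.toLinearMap := by
  -- both sides with `map ρU (map ρV ρW)` factored out on the right; equal by associativity in `H`
  have key : (LinearMap.mul' k H).rTensor ((U ⊗[k] V) ⊗[k] W)
        ∘ₗ (tensorTensorTensorComm k H (U ⊗[k] V) H W).toLinearMap
        ∘ₗ ((LinearMap.mul' k H).rTensor (U ⊗[k] V)
          ∘ₗ (tensorTensorTensorComm k H U H V).toLinearMap).rTensor (H ⊗[k] W)
        ∘ₗ (TensorProduct.assoc k (H ⊗[k] U) (H ⊗[k] V) (H ⊗[k] W)).symm.toLinearMap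
      = (TensorProduct.assoc k U V W).symm.toLinearMap.lTensor H
        ∘ₗ (LinearMap.mul' k H).rTensor (U ⊗[k] (V ⊗[k] W))
        ∘ₗ (tensorTensorTensorComm k H U H (V ⊗[k] W)).toLinearMap
        ∘ₗ ((LinearMap.mul' k H).rTensor (V ⊗[k] W)
          ∘ₗ (tensorTensorTensorComm k H V H W).toLinearMap).lTensor (H ⊗[k] U) := by
    ext; simp [mul_assoc]
  have := congrArg (· ∘ₗ TensorProduct.map ρU (TensorProduct.map ρV ρW)) key
  unfold IsColinear diagCoact
  simp only [LinearMap.comp_assoc, lTensor_comp_map] at this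
  rw [← TensorProduct.map_map_comp_assoc_symm_eq] at this
  simp only [← LinearMap.comp_assoc, rTensor_comp_map] at this
  simpa only [LinearMap.comp_assoc] using this

end DiagCoact

namespace BHA

variable {k H A : Type u} [Field k] [Ring H] [HopfAlgebra k H] [AddCommGroup A] [Module k A]
  (S : BHA k H A)

noncomputable def mulLeft (a : A) : A →ₗ[k] A := S.mul ∘ₗ TensorProduct.mk k A A a

noncomputable def mulRight (b : A) : A →ₗ[k] A := S.mul ∘ₗ (TensorProduct.mk k A A).flip b

@[simp] theorem mulLeft_apply (a b : A) : S.mulLeft a b = S.mul (a ⊗ₜ b) := rfl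

@[simp] theorem mulRight_apply (a b : A) : S.mulRight b a = S.mul (a ⊗ₜ b) := rfl

theorem mul_assoc_tmul (a b c : A) :
    S.mul (S.mul (a ⊗ₜ b) ⊗ₜ c) = S.mul (a ⊗ₜ S.mul (b ⊗ₜ c)) := by
  simpa using LinearMap.congr_fun S.mul_assoc' ((a ⊗ₜ b) ⊗ₜ c)

theorem mulLeft_mul (a b : A) : S.mulLeft (S.mul (a ⊗ₜ b)) = S.mulLeft a ∘ₗ S.mulLeft b := by
  ext c; simp [mul_assoc_tmul]

theorem mulRight_one : S.mulRight S.one = LinearMap.id := by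
  ext a; simp [S.mul_one']

theorem lid_rTensor_counit_comul (a : A) :
    TensorProduct.lid k A (S.counit.rTensor A (S.comul a)) = a := by
  simpa using LinearMap.congr_fun S.isCoalg.counit a

theorem rid_lTensor_counit_comul (a : A) :
    TensorProduct.rid k A (S.counit.lTensor A (S.comul a)) = a := by
  simpa using LinearMap.congr_fun S.comul_counit a

theorem lTensor_comul_comp_comul :
    S.comul.lTensor A ∘ₗ S.comul
      = (TensorProduct.assoc k A A A).toLinearMap ∘ₗ S.comul.rTensor A ∘ₗ S.comul := by
  rw [S.isCoalg.coassoc, ← LinearMap.comp_assoc, ← LinearEquiv.coe_trans,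
    LinearEquiv.symm_trans_self, LinearEquiv.refl_toLinearMap, LinearMap.id_comp]

theorem comul_mul_tmul (a b : A) :
    S.comul (S.mul (a ⊗ₜ b)) = S.mulAA (S.comul a ⊗ₜ S.comul b) := by
  simpa using LinearMap.congr_fun S.comul_mul (a ⊗ₜ b)

theorem mulAA_tmul (a b u v : A) :
    S.mulAA ((a ⊗ₜ b) ⊗ₜ (u ⊗ₜ v))
      = map (S.mulLeft a ∘ₗ S.act ∘ₗ (TensorProduct.mk k H A).flip u) (S.mulRight v)
          (S.coact b) := by
  rw [S.mulAA_def, S.braid_def]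
  simp only [LinearMap.comp_apply, LinearEquiv.coe_coe, TensorProduct.assoc_tmul,
    LinearMap.lTensor_tmul, TensorProduct.assoc_symm_tmul, LinearMap.rTensor_tmul]
  induction S.coact b using TensorProduct.induction_on with
  | zero => simp
  | tmul h c => simp
  | add s t hs ht => simp [add_tmul, tmul_add, hs, ht]

theorem mulAA_tmul_tmul_eq_lTensor_mulRight (t : A ⊗[k] A) (u v : A) :
    S.mulAA (t ⊗ₜ (u ⊗ₜ v)) = (S.mulRight v).lTensor A (S.mulAA (t ⊗ₜ (u ⊗ₜ S.one))) := by
  induction t using TensorProduct.induction_on with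
  | zero => simp
  | tmul a b => simp [mulAA_tmul, mulRight_one]
  | add s t hs ht => simp [add_tmul, hs, ht]

noncomputable def conv (f g : A →ₗ[k] A) : A →ₗ[k] A := S.mul ∘ₗ map f g ∘ₗ S.comul

noncomputable def unitCounit : A →ₗ[k] A := S.counit.smulRight S.one

theorem conv_assoc (f g h : A →ₗ[k] A) :
    S.conv (S.conv f g) h = S.conv f (S.conv g h) := by
  have hl : map (S.conv f g) h = S.mul.rTensor A ∘ₗ map (map f g) h ∘ₗ S.comul.rTensor A := by
    simp [conv, ← LinearMap.comp_assoc]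
  have hr : map f (S.conv g h) = S.mul.lTensor A ∘ₗ map f (map g h) ∘ₗ S.comul.lTensor A := by
    simp [conv, ← LinearMap.comp_assoc]
  simp only [conv] at hl hr ⊢
  rw [hl, hr]
  calc _ = S.mul ∘ₗ S.mul.lTensor A ∘ₗ (TensorProduct.assoc k A A A).toLinearMap
        ∘ₗ map (map f g) h ∘ₗ S.comul.rTensor A ∘ₗ S.comul := by
        simp only [← LinearMap.comp_assoc, S.mul_assoc']
    _ = _ := by
        simp only [LinearMap.comp_assoc, lTensor_comul_comp_comul]
        simp only [← LinearMap.comp_assoc, TensorProduct.map_map_comp_assoc_eq]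

theorem conv_unitCounit (f : A →ₗ[k] A) : S.conv f S.unitCounit = f := by
  have h : S.mul ∘ₗ map f S.unitCounit
      = f ∘ₗ (TensorProduct.rid k A).toLinearMap ∘ₗ S.counit.lTensor A := by
    ext a b; simp [unitCounit, S.mul_one']
  rw [conv, ← LinearMap.comp_assoc, h]
  simp only [LinearMap.comp_assoc, S.comul_counit, LinearMap.comp_id]

theorem unitCounit_conv (f : A →ₗ[k] A) : S.conv S.unitCounit f = f := by
  have h : S.mul ∘ₗ map S.unitCounit f
      = f ∘ₗ (TensorProduct.lid k A).toLinearMap ∘ₗ S.counit.rTensor A := by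
    ext a b; simp [unitCounit, ← TensorProduct.smul_tmul', S.one_mul']
  rw [conv, ← LinearMap.comp_assoc, h]
  simp only [LinearMap.comp_assoc, S.isCoalg.counit, LinearMap.comp_id]

theorem smul_conv (r : k) (f g : A →ₗ[k] A) : S.conv (r • f) g = r • S.conv f g := by
  simp [conv, TensorProduct.map_smul_left, LinearMap.smul_comp, LinearMap.comp_smul]

theorem conv_id_antipode : S.conv LinearMap.id S.antipode = S.unitCounit := by
  ext a; exact S.antipode_right a

theorem conv_antipode_id : S.conv S.antipode LinearMap.id = S.unitCounit := by
  ext a; exact S.antipode_left a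

section GaloisMap

variable {M : Type*} [AddCommGroup M] [Module k M]

/-- `x ⊗ y ↦ x f(y⁽¹⁾) ⊗ g(y⁽²⁾)`. -/
noncomputable def galoisMap (f : A →ₗ[k] A) (g : A →ₗ[k] M) : A ⊗[k] A →ₗ[k] A ⊗[k] M :=
  S.mul.rTensor M ∘ₗ (TensorProduct.assoc k A A M).symm.toLinearMap
    ∘ₗ (map f g ∘ₗ S.comul).lTensor A

theorem galoisMap_tmul (f : A →ₗ[k] A) (g : A →ₗ[k] M) (x y : A) :
    S.galoisMap f g (x ⊗ₜ y) = map (S.mulLeft x ∘ₗ f) g (S.comul y) := by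
  have h : S.mul.rTensor M ∘ₗ (TensorProduct.assoc k A A M).symm.toLinearMap
      ∘ₗ TensorProduct.mk k A (A ⊗[k] M) x ∘ₗ map f g = map (S.mulLeft x ∘ₗ f) g := by
    ext; simp
  exact LinearMap.congr_fun h (S.comul y)

theorem lTensor_comp_galoisMap {N : Type*} [AddCommGroup N] [Module k N]
    (f : A →ₗ[k] A) (g : A →ₗ[k] M) (g' : M →ₗ[k] N) :
    g'.lTensor A ∘ₗ S.galoisMap f g = S.galoisMap f (g' ∘ₗ g) := by
  ext x y; simp [galoisMap_tmul]

theorem galoisMap_comp_rTensor_mulLeft (f : A →ₗ[k] A) (g : A →ₗ[k] M) (x : A) :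
    S.galoisMap f g ∘ₗ (S.mulLeft x).rTensor A = (S.mulLeft x).rTensor M ∘ₗ S.galoisMap f g := by
  ext a b; simp [galoisMap_tmul, mulLeft_mul, LinearMap.comp_assoc]

theorem galoisMap_comp_rTensor_comul (f f' : A →ₗ[k] A) (g : A →ₗ[k] M) :
    S.galoisMap f g ∘ₗ f'.rTensor A ∘ₗ S.comul = map (S.conv f' f) g ∘ₗ S.comul := by
  have hmap : (map f g ∘ₗ S.comul).lTensor A ∘ₗ f'.rTensor A
      = map f' (map f g) ∘ₗ S.comul.lTensor A :=
    TensorProduct.ext' fun a b => by simp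
  have hassoc : (TensorProduct.assoc k A A M).symm.toLinearMap ∘ₗ map f' (map f g)
      ∘ₗ (TensorProduct.assoc k A A A).toLinearMap = map (map f' f) g := by
    ext; simp
  calc S.galoisMap f g ∘ₗ f'.rTensor A ∘ₗ S.comul
      = S.mul.rTensor M ∘ₗ (TensorProduct.assoc k A A M).symm.toLinearMap
          ∘ₗ ((map f g ∘ₗ S.comul).lTensor A ∘ₗ f'.rTensor A) ∘ₗ S.comul := by
        simp only [galoisMap, LinearMap.comp_assoc]
    _ = S.mul.rTensor M ∘ₗ (TensorProduct.assoc k A A M).symm.toLinearMap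
          ∘ₗ map f' (map f g) ∘ₗ (S.comul.lTensor A ∘ₗ S.comul) := by
        rw [hmap]; simp only [LinearMap.comp_assoc]
    _ = S.mul.rTensor M ∘ₗ ((TensorProduct.assoc k A A M).symm.toLinearMap
          ∘ₗ map f' (map f g) ∘ₗ (TensorProduct.assoc k A A A).toLinearMap)
          ∘ₗ S.comul.rTensor A ∘ₗ S.comul := by
        rw [lTensor_comul_comp_comul]; simp only [LinearMap.comp_assoc]
    _ = map (S.conv f' f) g ∘ₗ S.comul := by
        rw [hassoc]
        simp only [conv, ← LinearMap.comp_assoc, rTensor_comp_map, map_comp_rTensor]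

theorem galoisMap_comp (f f' : A →ₗ[k] A) (g : A →ₗ[k] M) :
    S.galoisMap f g ∘ₗ S.galoisMap f' LinearMap.id = S.galoisMap (S.conv f' f) g := by
  refine TensorProduct.ext' fun x y => ?_
  have h := LinearMap.congr_fun (S.galoisMap_comp_rTensor_comul f f' g) y
  have h' := LinearMap.congr_fun (S.galoisMap_comp_rTensor_mulLeft f g x) (f'.rTensor A (S.comul y))
  simp only [LinearMap.comp_apply] at h h'
  rw [LinearMap.comp_apply, galoisMap_tmul, galoisMap_tmul, ← rTensor, rTensor_comp_apply,
    h', h, rTensor_map]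

theorem galoisMap_unitCounit : S.galoisMap S.unitCounit LinearMap.id = LinearMap.id := by
  refine TensorProduct.ext' fun x y => ?_
  have h : map (S.mulLeft x ∘ₗ S.unitCounit) LinearMap.id
      = TensorProduct.mk k A A x ∘ₗ (TensorProduct.lid k A).toLinearMap ∘ₗ S.counit.rTensor A := by
    ext a b; simp [unitCounit, TensorProduct.smul_tmul, S.mul_one']
  rw [galoisMap_tmul, h]
  simp [lid_rTensor_counit_comul]

theorem isColinear_galoisMap_id :
    IsColinear (diagCoact k S.coact S.coact) (diagCoact k S.coact S.coact)
      (S.galoisMap LinearMap.id LinearMap.id) := by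
  have hmul : IsColinear (diagCoact k S.coact S.coact) S.coact S.mul := S.coact_mul
  have hcomul : IsColinear S.coact (diagCoact k S.coact S.coact) S.comul := S.comul_colinear
  simpa [galoisMap, LinearMap.rTensor, LinearMap.lTensor, LinearMap.comp_assoc] using
    ((hmul.map (isColinear_id S.coact)).comp (isColinear_assoc_symm _ _ _)).comp
      ((isColinear_id S.coact).map hcomul)

theorem galoisMap_id_comp_galoisMap_antipode :
    S.galoisMap LinearMap.id LinearMap.id ∘ₗ S.galoisMap S.antipode LinearMap.id
      = LinearMap.id := by
  rw [galoisMap_comp, conv_antipode_id, galoisMap_unitCounit]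

theorem galoisMap_antipode_comp_galoisMap_id :
    S.galoisMap S.antipode LinearMap.id ∘ₗ S.galoisMap LinearMap.id LinearMap.id
      = LinearMap.id := by
  rw [galoisMap_comp, conv_id_antipode, galoisMap_unitCounit]

end GaloisMap

/-- `u ↦ S(c⁽¹⁾ (c⁽²⁾₍₋₁₎ · u)) c⁽²⁾₍₀₎`. -/
noncomputable def antipodeTwist (c : A) : A →ₗ[k] A :=
  S.mul ∘ₗ S.antipode.rTensor A ∘ₗ S.mulAA ∘ₗ TensorProduct.mk k (A ⊗[k] A) (A ⊗[k] A) (S.comul c)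
    ∘ₗ (TensorProduct.mk k A A).flip S.one

theorem mul_rTensor_antipode_lTensor_mulRight (v : A) :
    S.mul ∘ₗ S.antipode.rTensor A ∘ₗ (S.mulRight v).lTensor A
      = S.mulRight v ∘ₗ S.mul ∘ₗ S.antipode.rTensor A :=
  TensorProduct.ext' fun a b => by simp [mul_assoc_tmul]

theorem conv_antipodeTwist_id (c : A) :
    S.conv (S.antipodeTwist c) LinearMap.id = S.counit c • S.unitCounit := by
  have h : S.mul ∘ₗ map (S.antipodeTwist c) LinearMap.id
      = S.mul ∘ₗ S.antipode.rTensor A ∘ₗ S.mulAA ∘ₗ TensorProduct.mk k _ _ (S.comul c) := by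
    refine TensorProduct.ext' fun u v => ?_
    have := LinearMap.congr_fun (S.mul_rTensor_antipode_lTensor_mulRight v)
      (S.mulAA (S.comul c ⊗ₜ (u ⊗ₜ S.one)))
    simp only [LinearMap.comp_apply, mulRight_apply] at this
    simp [antipodeTwist, S.mulAA_tmul_tmul_eq_lTensor_mulRight _ u v, this]
  ext y
  have hy := S.antipode_left (S.mul (c ⊗ₜ y))
  rw [comul_mul_tmul, S.counit_mul] at hy
  have := LinearMap.congr_fun h (S.comul y)
  simp only [LinearMap.comp_apply, TensorProduct.mk_apply] at this
  simp [conv, unitCounit, mul_smul, this, hy]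

theorem antipodeTwist_eq (c : A) : S.antipodeTwist c = S.counit c • S.antipode :=
  calc S.antipodeTwist c
      = S.conv (S.antipodeTwist c) (S.conv LinearMap.id S.antipode) := by
        rw [conv_id_antipode, conv_unitCounit]
    _ = S.counit c • S.antipode := by
        rw [← conv_assoc, conv_antipodeTwist_id, smul_conv, unitCounit_conv]

section Coideal

variable {K : Submodule k A}

theorem mkQ_KplusA_mul_of_mem (h1 : S.one ∈ K) {c : A} (hc : c ∈ K) (v : A) :
    (S.KplusA K).mkQ (S.mul (c ⊗ₜ v)) = S.counit c • (S.KplusA K).mkQ v := by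
  rw [← map_smul, Submodule.mkQ_apply, Submodule.mkQ_apply, Submodule.Quotient.eq]
  have hc' : c - S.counit c • S.one ∈ K ⊓ ker S.counit :=
    ⟨sub_mem hc (K.smul_mem _ h1), by simp [S.counit_one]⟩
  refine ⟨(⟨_, hc'⟩ : ↥(K ⊓ ker S.counit)) ⊗ₜ v, ?_⟩
  simp [sub_tmul, ← smul_tmul', S.one_mul']

theorem mkQ_relK_mul_tmul {c : A} (hc : c ∈ K) (x y : A) :
    (S.relK K).mkQ (S.mul (x ⊗ₜ c) ⊗ₜ y) = (S.relK K).mkQ (x ⊗ₜ S.mul (c ⊗ₜ y)) :=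
  (Submodule.Quotient.eq _).mpr (Submodule.subset_span ⟨x, y, c, hc, rfl⟩)

theorem KplusA_le_ker {N : Type*} [AddCommGroup N] [Module k N] {f : A →ₗ[k] N}
    (h : ∀ c ∈ K, S.counit c = 0 → ∀ y, f (S.mul (c ⊗ₜ y)) = 0) : S.KplusA K ≤ ker f :=
  LinearMap.range_le_ker_iff.mpr (TensorProduct.ext' fun c y => h c c.2.1 c.2.2 y)

theorem relK_le_ker {N : Type*} [AddCommGroup N] [Module k N] {f : A ⊗[k] A →ₗ[k] N}
    (h : ∀ x y c, c ∈ K → f (S.mul (x ⊗ₜ c) ⊗ₜ y) = f (x ⊗ₜ S.mul (c ⊗ₜ y))) :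
    S.relK K ≤ ker f :=
  Submodule.span_le.mpr fun _ ⟨x, y, c, hc, hz⟩ => by simp [hz, h x y c hc]

theorem rTensor_assoc_symm_lTensor_deltaBar_tmul {X : Type*} [AddCommGroup X] [Module k X]
    (F : A ⊗[k] A →ₗ[k] X) (x y : A) :
    (F.rTensor _ ∘ₗ (TensorProduct.assoc k A A (A ⧸ S.KplusA K)).symm.toLinearMap
      ∘ₗ (S.deltaBar K).lTensor A) (x ⊗ₜ y)
      = map (F ∘ₗ TensorProduct.mk k A A x) (S.KplusA K).mkQ (S.comul y) := by
  have h : F.rTensor _ ∘ₗ (TensorProduct.assoc k A A (A ⧸ S.KplusA K)).symm.toLinearMap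
      ∘ₗ TensorProduct.mk k A _ x ∘ₗ (S.KplusA K).mkQ.lTensor A
      = map (F ∘ₗ TensorProduct.mk k A A x) (S.KplusA K).mkQ := by
    ext; simp
  exact LinearMap.congr_fun h (S.comul y)

variable (hK : S.IsLeftCoidealSubalgebra K)
include hK

theorem map_mkQ_KplusA_mulRight_coact {w : A} (hw : w ∈ K) {N : Type*} [AddCommGroup N]
    [Module k N] (f : H →ₗ[k] N) (v : A) :
    map f ((S.KplusA K).mkQ ∘ₗ S.mulRight v) (S.coact w)
      = S.counit w • (f 1 ⊗ₜ (S.KplusA K).mkQ v) := by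
  have h := eq_of_mem_range_lTensor_subtype K
    (f := map f ((S.KplusA K).mkQ ∘ₗ S.mulRight v))
    (g := map f (toSpanSingleton k _ ((S.KplusA K).mkQ v)) ∘ₗ S.counit.lTensor H)
    (fun h κ hκ => by simp [S.mkQ_KplusA_mul_of_mem hK.1 hκ, tmul_smul]) (hK.2.2.2 w hw)
  rw [h, LinearMap.comp_apply, S.counit_colinear]
  simp

theorem map_mkQ_KplusA_mulAA_comul {c : A} (hc : c ∈ K) {N : Type*} [AddCommGroup N] [Module k N]
    (g : A →ₗ[k] N) (s : A ⊗[k] A) :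
    map g (S.KplusA K).mkQ (S.mulAA (S.comul c ⊗ₜ s))
      = map (g ∘ₗ S.mulLeft c) (S.KplusA K).mkQ s := by
  induction s using TensorProduct.induction_on with
  | zero => simp
  | tmul u v =>
    have h := eq_of_mem_range_lTensor_subtype K
      (f := map g (S.KplusA K).mkQ ∘ₗ S.mulAA ∘ₗ (TensorProduct.mk k _ _).flip (u ⊗ₜ v))
      (g := (TensorProduct.mk k N _).flip ((S.KplusA K).mkQ v) ∘ₗ g ∘ₗ S.mulRight u
        ∘ₗ (TensorProduct.rid k A).toLinearMap ∘ₗ S.counit.lTensor A)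
      (fun a w hw => by
        have := S.map_mkQ_KplusA_mulRight_coact hK hw
          (g ∘ₗ S.mulLeft a ∘ₗ S.act ∘ₗ (TensorProduct.mk k H A).flip u) v
        simp only [LinearMap.comp_apply, LinearMap.flip_apply, TensorProduct.mk_apply, mulAA_tmul,
          map_map] at this ⊢
        simp [this, S.act_one', ← smul_tmul'])
      (hK.2.2.1 c hc)
    simpa [rid_lTensor_counit_comul] using h
  | add s t hs ht => simp [tmul_add, hs, ht]

theorem lTensor_mkQ_KplusA_coact_mul {c : A} (hc : c ∈ K) (a : A) :
    (S.KplusA K).mkQ.lTensor H (S.coact (S.mul (c ⊗ₜ a)))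
      = S.counit c • (S.KplusA K).mkQ.lTensor H (S.coact a) := by
  have hmul := LinearMap.congr_fun S.coact_mul (c ⊗ₜ a)
  simp only [LinearMap.comp_apply, diagCoact, LinearEquiv.coe_coe, map_tmul] at hmul
  rw [hmul]
  induction S.coact a using TensorProduct.induction_on with
  | zero => simp
  | tmul h b =>
    have e : (S.KplusA K).mkQ.lTensor H ∘ₗ S.mul.lTensor H ∘ₗ (LinearMap.mul' k H).rTensor _
        ∘ₗ (tensorTensorTensorComm k H A H A).toLinearMap ∘ₗ (TensorProduct.mk k _ _).flip (h ⊗ₜ b)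
        = map (LinearMap.mulRight k h) ((S.KplusA K).mkQ ∘ₗ S.mulRight b) :=
      TensorProduct.ext' fun h' w => by simp
    have := LinearMap.congr_fun e (S.coact c)
    simp only [LinearMap.comp_apply, LinearMap.flip_apply, TensorProduct.mk_apply,
      LinearEquiv.coe_coe] at this
    rw [this, S.map_mkQ_KplusA_mulRight_coact hK hc]
    simp
  | add s t hs ht => simp [tmul_add, hs, ht]

theorem KplusA_le_ker_comul :
    S.KplusA K ≤ ker (map (S.KplusA K).mkQ (S.KplusA K).mkQ ∘ₗ S.comul) :=
  S.KplusA_le_ker fun c hc hε y => by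
    have h0 : (S.KplusA K).mkQ ∘ₗ S.mulLeft c = 0 :=
      LinearMap.ext fun a => (Submodule.Quotient.mk_eq_zero _).mpr ⟨⟨c, hc, hε⟩ ⊗ₜ a, rfl⟩
    simp [comul_mul_tmul, S.map_mkQ_KplusA_mulAA_comul hK hc, h0]

theorem KplusA_le_ker_coact : S.KplusA K ≤ ker ((S.KplusA K).mkQ.lTensor H ∘ₗ S.coact) :=
  S.KplusA_le_ker fun c hc hε y => by simp [S.lTensor_mkQ_KplusA_coact_mul hK hc, hε]

theorem relK_le_ker_galoisMap : S.relK K ≤ ker (S.galoisMap LinearMap.id (S.KplusA K).mkQ) :=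
  S.relK_le_ker fun x y c hc => by
    simp [galoisMap_tmul, comul_mul_tmul, S.map_mkQ_KplusA_mulAA_comul hK hc, mulLeft_mul]

theorem relK_le_ker_deltaBar :
    S.relK K ≤ ker ((S.relK K).mkQ.rTensor _
      ∘ₗ (TensorProduct.assoc k A A (A ⧸ S.KplusA K)).symm.toLinearMap
      ∘ₗ (S.deltaBar K).lTensor A) :=
  S.relK_le_ker fun x y c hc => by
    have h : (S.relK K).mkQ ∘ₗ TensorProduct.mk k A A (S.mul (x ⊗ₜ c))
        = ((S.relK K).mkQ ∘ₗ TensorProduct.mk k A A x) ∘ₗ S.mulLeft c :=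
      LinearMap.ext fun a => by simp [S.mkQ_relK_mul_tmul hc]
    rw [rTensor_assoc_symm_lTensor_deltaBar_tmul, rTensor_assoc_symm_lTensor_deltaBar_tmul,
      comul_mul_tmul, S.map_mkQ_KplusA_mulAA_comul hK hc, h]

theorem exists_restrictsCoact : ∃ coactK, S.RestrictsCoact K coactK :=
  exists_lTensor_subtype_comp_eq K (S.coact ∘ₗ K.subtype) fun κ => hK.2.2.2 κ κ.2

/-- The generators of `relK` are the images of `x ⊗ c ⊗ y ∈ A ⊗ K ⊗ A` under two `H`-colinear
maps `A ⊗ K ⊗ A → A ⊗ A` that agree modulo `relK`. -/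
theorem relK_le_ker_coact :
    S.relK K ≤ ker ((S.relK K).mkQ.lTensor H ∘ₗ diagCoact k S.coact S.coact) := by
  obtain ⟨coactK, hcoactK⟩ := S.exists_restrictsCoact hK
  let ι : A ⊗[k] (K ⊗[k] A) →ₗ[k] A ⊗[k] (A ⊗[k] A) := map LinearMap.id (map K.subtype LinearMap.id)
  have hι : IsColinear (diagCoact k S.coact (diagCoact k coactK S.coact))
      (diagCoact k S.coact (diagCoact k S.coact S.coact)) ι :=
    IsColinear.map (isColinear_id _) (IsColinear.map hcoactK.symm (isColinear_id _))
  have hmul : IsColinear (diagCoact k S.coact S.coact) S.coact S.mul := S.coact_mul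
  have h₁ := ((hmul.map (isColinear_id S.coact)).comp (isColinear_assoc_symm _ _ _)).comp hι
  have h₂ := ((isColinear_id S.coact).map hmul).comp hι
  have hq : (S.relK K).mkQ ∘ₗ (map S.mul LinearMap.id
        ∘ₗ (TensorProduct.assoc k A A A).symm.toLinearMap) ∘ₗ ι
      = (S.relK K).mkQ ∘ₗ map LinearMap.id S.mul ∘ₗ ι := by
    ext x c y; simp [ι, S.mkQ_relK_mul_tmul c.2]
  have key : (S.relK K).mkQ.lTensor H ∘ₗ diagCoact k S.coact S.coact
        ∘ₗ (map S.mul LinearMap.id ∘ₗ (TensorProduct.assoc k A A A).symm.toLinearMap) ∘ₗ ι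
      = (S.relK K).mkQ.lTensor H ∘ₗ diagCoact k S.coact S.coact ∘ₗ map LinearMap.id S.mul ∘ₗ ι := by
    unfold IsColinear at h₁ h₂
    rw [h₁, ← LinearMap.comp_assoc, ← lTensor_comp, hq, lTensor_comp, LinearMap.comp_assoc, ← h₂]
  refine S.relK_le_ker fun x y c hc => ?_
  simpa [ι] using LinearMap.congr_fun key (x ⊗ₜ (⟨c, hc⟩ ⊗ₜ y))

theorem mulAA_comul_tmul_one_mem {c : A} (hc : c ∈ K) (u : A) :
    S.mulAA (S.comul c ⊗ₜ (u ⊗ₜ S.one)) ∈ range (K.subtype.lTensor A) := by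
  obtain ⟨t, ht⟩ := hK.2.2.1 c hc
  rw [← ht]
  clear ht
  induction t using TensorProduct.induction_on with
  | zero => simp
  | tmul a w =>
    obtain ⟨r, hr⟩ := hK.2.2.2 w w.2
    refine ⟨map (S.mulLeft a ∘ₗ S.act ∘ₗ (TensorProduct.mk k H A).flip u) LinearMap.id r, ?_⟩
    simp [mulAA_tmul, mulRight_one, ← hr]
  | add s t hs ht => simpa [add_tmul] using add_mem hs ht

theorem mkQ_relK_galoisMap_antipode_tmul_mul {c : A} (hc : c ∈ K) (x y : A) :
    (S.relK K).mkQ (S.galoisMap S.antipode LinearMap.id (x ⊗ₜ S.mul (c ⊗ₜ y)))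
      = S.counit c • (S.relK K).mkQ (S.galoisMap S.antipode LinearMap.id (x ⊗ₜ y)) := by
  rw [galoisMap_tmul, galoisMap_tmul, comul_mul_tmul]
  induction S.comul y using TensorProduct.induction_on with
  | zero => simp
  | tmul u v =>
    have h := eq_of_mem_range_lTensor_subtype K
      (f := (S.relK K).mkQ ∘ₗ map (S.mulLeft x ∘ₗ S.antipode) (S.mulRight v))
      (g := (S.relK K).mkQ ∘ₗ (TensorProduct.mk k A A).flip v ∘ₗ S.mulLeft x ∘ₗ S.mul
        ∘ₗ S.antipode.rTensor A)
      (fun a w hw => by simp [← S.mkQ_relK_mul_tmul hw, mul_assoc_tmul])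
      (S.mulAA_comul_tmul_one_mem hK hc u)
    have hT := LinearMap.congr_fun (S.antipodeTwist_eq c) u
    simp only [antipodeTwist, LinearMap.comp_apply, TensorProduct.mk_apply,
      LinearMap.flip_apply] at h hT
    simp [S.mulAA_tmul_tmul_eq_lTensor_mulRight _ u v, h, hT, ← smul_tmul']
  | add s t hs ht => simp only [tmul_add, map_add, hs, ht, smul_add]

theorem galoisMap_antipode_lTensor_mem_relK (w : A ⊗[k] S.KplusA K) :
    S.galoisMap S.antipode LinearMap.id ((S.KplusA K).subtype.lTensor A w) ∈ S.relK K := by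
  have h : (S.relK K).mkQ ∘ₗ S.galoisMap S.antipode LinearMap.id
      ∘ₗ (S.KplusA K).subtype.lTensor A = 0 :=
    TensorProduct.ext' fun x z => by
      simpa using S.KplusA_le_ker (f := (S.relK K).mkQ ∘ₗ S.galoisMap S.antipode LinearMap.id
        ∘ₗ TensorProduct.mk k A A x)
        (fun c hc hε y => by simp [S.mkQ_relK_galoisMap_antipode_tmul_mul hK hc, hε]) z.2
  rw [← Submodule.Quotient.mk_eq_zero, ← Submodule.mkQ_apply]
  exact LinearMap.congr_fun h w

end Coideal

section Canonical

variable {K : Submodule k A} (hK : S.IsLeftCoidealSubalgebra K)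

noncomputable def quotComul : A ⧸ S.KplusA K →ₗ[k] (A ⧸ S.KplusA K) ⊗[k] (A ⧸ S.KplusA K) :=
  (S.KplusA K).liftQ _ (S.KplusA_le_ker_comul hK)

noncomputable def quotCoact : A ⧸ S.KplusA K →ₗ[k] H ⊗[k] (A ⧸ S.KplusA K) :=
  (S.KplusA K).liftQ _ (S.KplusA_le_ker_coact hK)

noncomputable def can : (A ⊗[k] A) ⧸ S.relK K →ₗ[k] A ⊗[k] (A ⧸ S.KplusA K) :=
  (S.relK K).liftQ _ (S.relK_le_ker_galoisMap hK)

noncomputable def balancedDelta :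
    (A ⊗[k] A) ⧸ S.relK K →ₗ[k] ((A ⊗[k] A) ⧸ S.relK K) ⊗[k] (A ⧸ S.KplusA K) :=
  (S.relK K).liftQ _ (S.relK_le_ker_deltaBar hK)

noncomputable def balancedCoact : (A ⊗[k] A) ⧸ S.relK K →ₗ[k] H ⊗[k] ((A ⊗[k] A) ⧸ S.relK K) :=
  (S.relK K).liftQ _ (S.relK_le_ker_coact hK)

theorem can_comp_mkQ :
    S.can hK ∘ₗ (S.relK K).mkQ
      = (S.KplusA K).mkQ.lTensor A ∘ₗ S.galoisMap LinearMap.id LinearMap.id := by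
  rw [can, Submodule.liftQ_mkQ, lTensor_comp_galoisMap, LinearMap.comp_id]

theorem can_injective : Function.Injective (S.can hK) := by
  rw [← LinearMap.ker_eq_bot, eq_bot_iff]
  intro u hu
  obtain ⟨w, rfl⟩ := (S.relK K).mkQ_surjective u
  have hw : S.galoisMap LinearMap.id LinearMap.id w ∈ ker ((S.KplusA K).mkQ.lTensor A) := by
    rw [LinearMap.mem_ker, ← LinearMap.comp_apply, ← S.can_comp_mkQ hK]
    exact hu
  rw [lTensor_mkQ] at hw
  obtain ⟨w', hw'⟩ := hw
  rw [Submodule.mem_bot, Submodule.mkQ_apply, Submodule.Quotient.mk_eq_zero,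
    ← LinearMap.id_apply (R := k) w, ← S.galoisMap_antipode_comp_galoisMap_id,
    LinearMap.comp_apply, ← hw']
  exact S.galoisMap_antipode_lTensor_mem_relK hK w'

theorem can_surjective : Function.Surjective (S.can hK) := by
  intro z
  obtain ⟨w, rfl⟩ := LinearMap.lTensor_surjective A (S.KplusA K).mkQ_surjective z
  refine ⟨(S.relK K).mkQ (S.galoisMap S.antipode LinearMap.id w), ?_⟩
  rw [← LinearMap.comp_apply, S.can_comp_mkQ hK, LinearMap.comp_apply,
    ← LinearMap.comp_apply (S.galoisMap _ _), galoisMap_id_comp_galoisMap_antipode,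
    LinearMap.id_apply]

theorem can_isColinear :
    IsColinear (S.balancedCoact hK) (diagCoact k S.coact (S.quotCoact hK)) (S.can hK) := by
  refine IsColinear.of_comp_surjective (Submodule.liftQ_mkQ _ _ _) (S.relK K).mkQ_surjective ?_
  have hp : IsColinear S.coact (S.quotCoact hK) (S.KplusA K).mkQ := Submodule.liftQ_mkQ _ _ _
  rw [can_comp_mkQ]
  exact ((isColinear_id S.coact).map hp).comp S.isColinear_galoisMap_id

theorem can_rightColinear :
    ((TensorProduct.assoc k A (A ⧸ S.KplusA K) (A ⧸ S.KplusA K)).symm.toLinearMap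
        ∘ₗ (S.quotComul hK).lTensor A) ∘ₗ S.can hK
      = (S.can hK).rTensor _ ∘ₗ S.balancedDelta hK := by
  refine Submodule.linearMap_qext _ (TensorProduct.ext' fun x y => ?_)
  have hΔ : S.quotComul hK ∘ₗ (S.KplusA K).mkQ
      = map (S.KplusA K).mkQ (S.KplusA K).mkQ ∘ₗ S.comul := Submodule.liftQ_mkQ _ _ _
  have hcan : S.can hK ∘ₗ (S.relK K).mkQ ∘ₗ TensorProduct.mk k A A x
      = map (S.mulLeft x) (S.KplusA K).mkQ ∘ₗ S.comul :=
    LinearMap.ext fun a => by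
      simpa [galoisMap_tmul] using LinearMap.congr_fun (S.can_comp_mkQ hK) (x ⊗ₜ a)
  have hy := LinearMap.congr_fun hcan y
  simp only [LinearMap.comp_apply, TensorProduct.mk_apply] at hy
  calc _ = (TensorProduct.assoc k A _ _).symm
          (map (S.mulLeft x) (map (S.KplusA K).mkQ (S.KplusA K).mkQ)
            (S.comul.lTensor A (S.comul y))) := by
        simp only [LinearMap.comp_apply, LinearEquiv.coe_coe]
        rw [hy, lTensor_map, hΔ, ← map_lTensor]
    _ = map (map (S.mulLeft x) (S.KplusA K).mkQ) (S.KplusA K).mkQ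
          (S.comul.rTensor A (S.comul y)) := by
        rw [← LinearMap.comp_apply (S.comul.lTensor A), lTensor_comul_comp_comul]
        simp [← map_map_assoc_symm]
    _ = _ := by
        simp [balancedDelta, rTensor_assoc_symm_lTensor_deltaBar_tmul, ← hcan]

end Canonical

end BHA

theorem canonical_map_bijective_colinear_general
    {k H A : Type u} [Field k] [Ring H] [HopfAlgebra k H]
    [AddCommGroup A] [Module k A] (S : BHA k H A)
    (K : Submodule k A) (hK : S.IsLeftCoidealSubalgebra K) :
    ∃ (ΔQ : (A ⧸ S.KplusA K) →ₗ[k] (A ⧸ S.KplusA K) ⊗[k] (A ⧸ S.KplusA K))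
      (coactQ : (A ⧸ S.KplusA K) →ₗ[k] H ⊗[k] (A ⧸ S.KplusA K))
      (canM : ((A ⊗[k] A) ⧸ S.relK K) →ₗ[k] A ⊗[k] (A ⧸ S.KplusA K))
      (δq : ((A ⊗[k] A) ⧸ S.relK K) →ₗ[k] ((A ⊗[k] A) ⧸ S.relK K) ⊗[k] (A ⧸ S.KplusA K))
      (ρq : ((A ⊗[k] A) ⧸ S.relK K) →ₗ[k] H ⊗[k] ((A ⊗[k] A) ⧸ S.relK K)),
      -- the induced comultiplication on `Ā`
      ΔQ ∘ₗ (S.KplusA K).mkQ = map (S.KplusA K).mkQ (S.KplusA K).mkQ ∘ₗ S.comul ∧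
      -- the induced `H`-coaction on `Ā`
      coactQ ∘ₗ (S.KplusA K).mkQ = (S.KplusA K).mkQ.lTensor H ∘ₗ S.coact ∧
      -- `can` is induced by `x ⊗ y ↦ x y⁽¹⁾ ⊗ (class of y⁽²⁾)`
      canM ∘ₗ (S.relK K).mkQ
        = S.mul.rTensor (A ⧸ S.KplusA K)
            ∘ₗ (TensorProduct.assoc k A A (A ⧸ S.KplusA K)).symm.toLinearMap
            ∘ₗ (S.deltaBar K).lTensor A ∧
      -- the right `Ā`-coaction on `A ⊗_K A`
      δq ∘ₗ (S.relK K).mkQ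
        = (S.relK K).mkQ.rTensor (A ⧸ S.KplusA K)
            ∘ₗ (TensorProduct.assoc k A A (A ⧸ S.KplusA K)).symm.toLinearMap
            ∘ₗ (S.deltaBar K).lTensor A ∧
      -- the diagonal `H`-coaction on `A ⊗_K A`
      ρq ∘ₗ (S.relK K).mkQ
        = (S.relK K).mkQ.lTensor H ∘ₗ diagCoact k S.coact S.coact ∧
      -- `can` is bijective
      Function.Bijective canM ∧
      -- `can` is right `Ā`-colinear
      ((TensorProduct.assoc k A (A ⧸ S.KplusA K) (A ⧸ S.KplusA K)).symm.toLinearMap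
          ∘ₗ ΔQ.lTensor A) ∘ₗ canM
        = canM.rTensor (A ⧸ S.KplusA K) ∘ₗ δq ∧
      -- `can` is left `H`-colinear
      diagCoact k S.coact coactQ ∘ₗ canM = canM.lTensor H ∘ₗ ρq :=
  ⟨S.quotComul hK, S.quotCoact hK, S.can hK, S.balancedDelta hK, S.balancedCoact hK,
    Submodule.liftQ_mkQ _ _ _, Submodule.liftQ_mkQ _ _ _, Submodule.liftQ_mkQ _ _ _,
    Submodule.liftQ_mkQ _ _ _, Submodule.liftQ_mkQ _ _ _, ⟨S.can_injective hK, S.can_surjective hK⟩,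
    S.can_rightColinear hK, S.can_isColinear hK⟩

/-- The canonical map `can : A ⊗_K A → A ⊗ Ā`,
`x ⊗ y ↦ x y⁽¹⁾ ⊗ (class of y⁽²⁾)`, is bijective, right `Ā`-colinear and left
`H`-colinear (with the induced coalgebra structure `Δ_Ā` on `Ā`, the induced `H`-coaction
on `Ā`, the right `Ā`-coaction and the diagonal `H`-coaction on `A ⊗_K A`). -/
theorem canonical_map_bijective_colinear
    {k H A : Type u} [Field k] [Ring H] [HopfAlgebra k H]
    [AddCommGroup A] [Module k A] (S : BHA k H A)
    (hbij : Function.Bijective (HopfAlgebra.antipode (R := k) (A := H)))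
    (K : Submodule k A) (hK : S.IsLeftCoidealSubalgebra K) :
    ∃ (ΔQ : (A ⧸ S.KplusA K) →ₗ[k] (A ⧸ S.KplusA K) ⊗[k] (A ⧸ S.KplusA K))
      (coactQ : (A ⧸ S.KplusA K) →ₗ[k] H ⊗[k] (A ⧸ S.KplusA K))
      (canM : ((A ⊗[k] A) ⧸ S.relK K) →ₗ[k] A ⊗[k] (A ⧸ S.KplusA K))
      (δq : ((A ⊗[k] A) ⧸ S.relK K) →ₗ[k] ((A ⊗[k] A) ⧸ S.relK K) ⊗[k] (A ⧸ S.KplusA K))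
      (ρq : ((A ⊗[k] A) ⧸ S.relK K) →ₗ[k] H ⊗[k] ((A ⊗[k] A) ⧸ S.relK K)),
      -- the induced comultiplication on `Ā`
      ΔQ ∘ₗ (S.KplusA K).mkQ = map (S.KplusA K).mkQ (S.KplusA K).mkQ ∘ₗ S.comul ∧
      -- the induced `H`-coaction on `Ā`
      coactQ ∘ₗ (S.KplusA K).mkQ = (S.KplusA K).mkQ.lTensor H ∘ₗ S.coact ∧
      -- `can` is induced by `x ⊗ y ↦ x y⁽¹⁾ ⊗ (class of y⁽²⁾)`
      canM ∘ₗ (S.relK K).mkQ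
        = S.mul.rTensor (A ⧸ S.KplusA K)
            ∘ₗ (TensorProduct.assoc k A A (A ⧸ S.KplusA K)).symm.toLinearMap
            ∘ₗ (S.deltaBar K).lTensor A ∧
      -- the right `Ā`-coaction on `A ⊗_K A`
      δq ∘ₗ (S.relK K).mkQ
        = (S.relK K).mkQ.rTensor (A ⧸ S.KplusA K)
            ∘ₗ (TensorProduct.assoc k A A (A ⧸ S.KplusA K)).symm.toLinearMap
            ∘ₗ (S.deltaBar K).lTensor A ∧
      -- the diagonal `H`-coaction on `A ⊗_K A`
      ρq ∘ₗ (S.relK K).mkQ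
        = (S.relK K).mkQ.lTensor H ∘ₗ diagCoact k S.coact S.coact ∧
      -- `can` is bijective
      Function.Bijective canM ∧
      -- `can` is right `Ā`-colinear
      ((TensorProduct.assoc k A (A ⧸ S.KplusA K) (A ⧸ S.KplusA K)).symm.toLinearMap
          ∘ₗ ΔQ.lTensor A) ∘ₗ canM
        = canM.rTensor (A ⧸ S.KplusA K) ∘ₗ δq ∧
      -- `can` is left `H`-colinear
      diagCoact k S.coact coactQ ∘ₗ canM = canM.lTensor H ∘ₗ ρq :=
  canonical_map_bijective_colinear_general S K hK
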